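/- In the convex setting (CP), let x* ∈ 𝒳 be an optimal solution (c_i(x*) ≤ 0 for all i and F(x*) ≤ F(z) for every feasible z). Let x ∈ 𝒳 be feasible and let z* ∈ 𝒳, μ ∈ ℝ^m_{≥0}, l ∈ ∂r(z*) satisfy the GHMA subproblem KKT conditions at x, with d = z* − x. Then: (a) F(z*) − F(x*) ≤ ((L + Σ_{i=1}^m μ_i L_i)/2)·‖d‖^{κ−1}·( ((1−κ)/(1+κ))·‖d‖² + ‖x − x*‖² − ‖z* − x*‖² ); and (b) if C₁ > 0 satisfies ‖x − x*‖ ≤ C₁ and ‖z* − x*‖ ≤ C₁, then F(z*) − F(x*) ≤ (L + Σ_{i=1}^m μ_i L_i)·C₁·‖d‖^κ. -/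

import Mathlib

/-!
Test the stationarity condition of the subproblem at `z = x*` and bound each of its terms: the
`f`-term by the Hölder descent lemma at `x` combined with the gradient inequality towards `x*`,
the `l`-term by the subgradient inequality, and each multiplier term by convexity of `cᵢ`,
feasibility of `x*` and complementary slackness, which trades `cᵢ(x) + ∇cᵢ(x)ᵀd` for the
Hölder term `Lᵢ‖d‖^{κ+1}/(κ+1)`. This bounds the gap by
`(L + Σ μᵢLᵢ)(‖d‖^{κ-1}⟪d, x* - z*⟫ + ‖d‖^{κ+1}/(κ+1))`. Part (a) follows by polarization of
`⟪d, x* - z*⟫`, part (b) by writing it as `⟪d, x* - x⟫ - ‖d‖²` and applying Cauchy–Schwarz.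
-/

open scoped RealInnerProductSpace
open Real Set

/-- The convex subdifferential of `r` at `u`. -/
def subgrad {n : ℕ} (r : EuclideanSpace ℝ (Fin n) → ℝ)
    (u : EuclideanSpace ℝ (Fin n)) : Set (EuclideanSpace ℝ (Fin n)) :=
  {l | ∀ z, r u + ⟪l, z - u⟫ ≤ r z}

lemma Finset.sum_smul_add_smul_eq {ι R M : Type*} [CommSemiring R] [AddCommMonoid M] [Module R M]
    (s : Finset ι) (μ Li : ι → R) (g : ι → M) (t : R) (d : M) :
    ∑ i ∈ s, μ i • (g i + (Li i * t) • d) =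
      ∑ i ∈ s, μ i • g i + ((∑ i ∈ s, μ i * Li i) * t) • d := by
  simp only [smul_add, Finset.sum_add_distrib, smul_smul, Finset.sum_mul, Finset.sum_smul,
    mul_assoc]

variable {E : Type*} [NormedAddCommGroup E] [InnerProductSpace ℝ E]

lemma rpow_add_one_eq_rpow_sub_one_mul_sq {a κ : ℝ} (ha : 0 ≤ a) (hκ : κ + 1 ≠ 0) :
    a ^ (κ + 1) = a ^ (κ - 1) * a ^ 2 := by
  rw [← rpow_two, ← rpow_add' ha (by intro h; apply hκ; linarith)]
  ring_nf

lemma rpow_mul_inner_add_rpow_div_eq {κ : ℝ} (hκ : κ + 1 ≠ 0) (x y z : E) :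
    ‖z - x‖ ^ (κ - 1) * ⟪z - x, y - z⟫ + ‖z - x‖ ^ (κ + 1) / (κ + 1) =
      ‖z - x‖ ^ (κ - 1) / 2 * ((1 - κ) / (1 + κ) * ‖z - x‖ ^ (2 : ℝ) +
        ‖x - y‖ ^ (2 : ℝ) - ‖z - y‖ ^ (2 : ℝ)) := by
  have hpolar : ‖x - y‖ ^ 2 = ‖z - y‖ ^ 2 + 2 * ⟪z - x, y - z⟫ + ‖z - x‖ ^ 2 := by
    rw [← sub_sub_sub_cancel_left y x z, norm_sub_sq_real, real_inner_comm, ← neg_sub y z,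
      inner_neg_right, norm_neg]
    ring
  have hκ' : 1 + κ ≠ 0 := by rwa [add_comm]
  rw [rpow_add_one_eq_rpow_sub_one_mul_sq (norm_nonneg _) hκ]
  simp only [rpow_two]
  field_simp
  rw [hpolar]
  ring

lemma rpow_mul_inner_add_rpow_div_le {κ C : ℝ} (hκ : 0 < κ) {x y z : E} (hC : ‖x - y‖ ≤ C) :
    ‖z - x‖ ^ (κ - 1) * ⟪z - x, y - z⟫ + ‖z - x‖ ^ (κ + 1) / (κ + 1) ≤ C * ‖z - x‖ ^ κ := by
  set τ := ‖z - x‖ ^ (κ - 1)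
  have hτ : 0 ≤ τ := rpow_nonneg (norm_nonneg _) _
  have hpow : ‖z - x‖ ^ κ = τ * ‖z - x‖ := by
    rw [← rpow_add_one' (norm_nonneg _) (by linarith)]
    ring_nf
  have hinner : ⟪z - x, y - z⟫ = ⟪z - x, y - x⟫ - ‖z - x‖ ^ 2 := by
    rw [← real_inner_self_eq_norm_sq, ← inner_sub_right, sub_sub_sub_cancel_right]
  have hcs : ⟪z - x, y - x⟫ ≤ ‖z - x‖ * C :=
    (real_inner_le_norm _ _).trans
      (mul_le_mul_of_nonneg_left (by rwa [norm_sub_rev]) (norm_nonneg _))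
  have hdiv : ‖z - x‖ ^ 2 / (κ + 1) ≤ ‖z - x‖ ^ 2 :=
    div_le_self (sq_nonneg _) (by linarith)
  rw [rpow_add_one_eq_rpow_sub_one_mul_sq (norm_nonneg _) (by linarith), hpow, hinner,
    mul_div_assoc]
  nlinarith [mul_le_mul_of_nonneg_left hcs hτ, mul_le_mul_of_nonneg_left hdiv hτ]

section

variable [CompleteSpace E]

lemma HasGradientAt.hasDerivAt_comp_lineMap {f : E → ℝ} {g x y : E} {t : ℝ}
    (hf : HasGradientAt f g (AffineMap.lineMap x y t)) :
    HasDerivAt (fun s : ℝ => f (AffineMap.lineMap x y s)) ⟪g, y - x⟫ t := by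
  have h := hf.hasFDerivAt.comp_hasDerivAt t (AffineMap.hasDerivAt_lineMap (a := x) (b := y))
  simp only [InnerProductSpace.toDual_apply_apply] at h
  exact h

lemma ConvexOn.add_inner_le_of_hasGradientAt {f : E → ℝ} {g x : E} (hconv : ConvexOn ℝ univ f)
    (hf : HasGradientAt f g x) (y : E) : f x + ⟪g, y - x⟫ ≤ f y := by
  have hline : ConvexOn ℝ univ (f ∘ AffineMap.lineMap (k := ℝ) x y) := by
    simpa using hconv.comp_affineMap (AffineMap.lineMap (k := ℝ) x y)
  have hslope := hline.le_slope_of_hasDerivAt (mem_univ 0) (mem_univ 1) zero_lt_one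
    (HasGradientAt.hasDerivAt_comp_lineMap (by simpa using hf))
  simp only [slope, sub_zero, inv_one, Function.comp_apply, AffineMap.lineMap_apply_one,
    AffineMap.lineMap_apply_zero, vsub_eq_sub, smul_eq_mul, one_mul] at hslope
  linarith

lemma le_add_inner_add_rpow_of_holderGradient {f : E → ℝ} {f' : E → E} {κ L : ℝ}
    (hf : ∀ z, HasGradientAt f (f' z) z) (hκ : 0 ≤ κ)
    (hholder : ∀ a b, ‖f' a - f' b‖ ≤ L * ‖a - b‖ ^ κ) (x y : E) :
    f y ≤ f x + ⟪f' x, y - x⟫ + L / (κ + 1) * ‖y - x‖ ^ (κ + 1) := by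
  set v := y - x
  set A := L / (κ + 1) * ‖v‖ ^ (κ + 1)
  -- the claim is `h 1 ≤ h 0`
  set h : ℝ → ℝ := fun t => f (AffineMap.lineMap x y t) - t * ⟪f' x, v⟫ - A * t ^ (κ + 1)
  have hderiv : ∀ t, HasDerivAt h
      (⟪f' (AffineMap.lineMap x y t), v⟫ - ⟪f' x, v⟫ - A * ((κ + 1) * t ^ κ)) t := fun t => by
    have hpow := (hasDerivAt_rpow_const (x := t) (p := κ + 1) (Or.inr (by linarith))).const_mul A
    have h' := ((hf (AffineMap.lineMap x y t)).hasDerivAt_comp_lineMap.sub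
      ((hasDerivAt_id t).mul_const ⟪f' x, v⟫)).sub hpow
    rw [one_mul, add_sub_cancel_right] at h'
    exact h'
  have hanti : AntitoneOn h (Icc 0 1) := by
    refine antitoneOn_of_hasDerivWithinAt_nonpos (convex_Icc 0 1)
      (fun t _ => (hderiv t).continuousAt.continuousWithinAt)
      (fun t _ => (hderiv t).hasDerivWithinAt) fun t ht => ?_
    rw [interior_Icc] at ht
    have hgrowth : ⟪f' (AffineMap.lineMap x y t) - f' x, v⟫ ≤ L * t ^ κ * ‖v‖ ^ (κ + 1) :=
      calc ⟪f' (AffineMap.lineMap x y t) - f' x, v⟫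
          ≤ ‖f' (AffineMap.lineMap x y t) - f' x‖ * ‖v‖ := real_inner_le_norm _ _
        _ ≤ L * ‖AffineMap.lineMap x y t - x‖ ^ κ * ‖v‖ :=
          mul_le_mul_of_nonneg_right (hholder _ _) (norm_nonneg _)
        _ = L * t ^ κ * ‖v‖ ^ (κ + 1) := by
          rw [← vsub_eq_sub, AffineMap.lineMap_vsub_left, vsub_eq_sub, norm_smul,
            norm_of_nonneg ht.1.le, mul_rpow ht.1.le (norm_nonneg _),
            rpow_add_one' (norm_nonneg _) (by linarith)]
          ring
    have hA : A * ((κ + 1) * t ^ κ) = L * t ^ κ * ‖v‖ ^ (κ + 1) := by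
      simp only [A]
      field_simp
    rw [inner_sub_left] at hgrowth
    linarith
  have hend := hanti (left_mem_Icc.2 zero_le_one) (right_mem_Icc.2 zero_le_one) zero_le_one
  simp only [h, AffineMap.lineMap_apply_one, AffineMap.lineMap_apply_zero, one_mul, one_rpow,
    mul_one, zero_mul, sub_zero, zero_rpow (by linarith : κ + 1 ≠ 0), mul_zero] at hend
  linarith

lemma ConvexOn.le_add_inner_add_rpow_of_holderGradient {f : E → ℝ} {f' : E → E} {κ L : ℝ}
    (hconv : ConvexOn ℝ univ f) (hf : ∀ z, HasGradientAt f (f' z) z) (hκ : 0 ≤ κ)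
    (hholder : ∀ a b, ‖f' a - f' b‖ ≤ L * ‖a - b‖ ^ κ) (x y z : E) :
    f z ≤ f y + ⟪f' x, z - y⟫ + L / (κ + 1) * ‖z - x‖ ^ (κ + 1) := by
  have hdescent := _root_.le_add_inner_add_rpow_of_holderGradient hf hκ hholder x z
  have hsupport := hconv.add_inner_le_of_hasGradientAt (hf x) y
  have hsplit : ⟪f' x, z - y⟫ = ⟪f' x, z - x⟫ - ⟪f' x, y - x⟫ := by
    rw [← inner_sub_right, sub_sub_sub_cancel_right]
  linarith

lemma ConvexOn.mul_inner_le_of_complementarity {c : E → ℝ} {g x y z : E} {μ a : ℝ}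
    (hconv : ConvexOn ℝ univ c) (hc : HasGradientAt c g x) (hμ : 0 ≤ μ) (hy : c y ≤ 0)
    (hcomp : μ * (c x + ⟪g, z - x⟫ + a) = 0) : μ * ⟪g, y - z⟫ ≤ μ * a := by
  have hsupport := mul_le_mul_of_nonneg_left (hconv.add_inner_le_of_hasGradientAt hc y) hμ
  have hsplit : ⟪g, y - z⟫ = ⟪g, y - x⟫ - ⟪g, z - x⟫ := by
    rw [← inner_sub_right, sub_sub_sub_cancel_right]
  nlinarith

theorem ghma_gap_le {ι : Type*} [Fintype ι] {f r : E → ℝ} {c : ι → E → ℝ} {f' : E → E}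
    {c' : ι → E → E} {κ L : ℝ} {Li μ : ι → ℝ} {x xstar zstar l : E}
    (hf : ∀ z, HasGradientAt f (f' z) z) (hc : ∀ i, HasGradientAt (c i) (c' i x) x)
    (hfconv : ConvexOn ℝ univ f) (hcconv : ∀ i, ConvexOn ℝ univ (c i)) (hκ : 0 ≤ κ)
    (hfholder : ∀ a b, ‖f' a - f' b‖ ≤ L * ‖a - b‖ ^ κ)
    (hxstarfeas : ∀ i, c i xstar ≤ 0) (hμ : ∀ i, 0 ≤ μ i)
    (hl : r zstar + ⟪l, xstar - zstar⟫ ≤ r xstar)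
    (hstat : 0 ≤
      ⟪f' x + (L * ‖zstar - x‖ ^ (κ - 1)) • (zstar - x) +
        (∑ i, μ i • (c' i x + (Li i * ‖zstar - x‖ ^ (κ - 1)) • (zstar - x))) + l,
        xstar - zstar⟫)
    (hcomp : ∀ i, μ i * (c i x + ⟪c' i x, zstar - x⟫ +
      (Li i / (κ + 1)) * ‖zstar - x‖ ^ (κ + 1)) = 0) :
    (f zstar + r zstar) - (f xstar + r xstar) ≤ (L + ∑ i, μ i * Li i) *
      (‖zstar - x‖ ^ (κ - 1) * ⟪zstar - x, xstar - zstar⟫ + ‖zstar - x‖ ^ (κ + 1) / (κ + 1)) := by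
  set d := zstar - x
  set w := xstar - zstar
  set τ := ‖d‖ ^ (κ - 1)
  set P := ‖d‖ ^ (κ + 1)
  set SL := ∑ i, μ i * Li i
  have hfw : ⟪f' x, w⟫ ≤ f xstar - f zstar + L / (κ + 1) * P := by
    have hthree := hfconv.le_add_inner_add_rpow_of_holderGradient hf hκ hfholder x xstar zstar
    rw [← neg_sub, inner_neg_right] at hthree
    linarith
  have hcw : ∑ i, μ i * ⟪c' i x, w⟫ ≤ SL / (κ + 1) * P :=
    calc ∑ i, μ i * ⟪c' i x, w⟫ ≤ ∑ i, μ i * (Li i / (κ + 1) * P) :=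
          Finset.sum_le_sum fun i _ =>
            (hcconv i).mul_inner_le_of_complementarity (hc i) (hμ i) (hxstarfeas i) (hcomp i)
      _ = SL / (κ + 1) * P := by
          rw [Finset.sum_div, Finset.sum_mul]
          exact Finset.sum_congr rfl fun i _ => by ring
  rw [Finset.sum_smul_add_smul_eq] at hstat
  simp only [inner_add_left, real_inner_smul_left, sum_inner] at hstat
  have hM : (L + SL) * (τ * ⟪d, w⟫ + P / (κ + 1))
      = L * τ * ⟪d, w⟫ + SL * τ * ⟪d, w⟫ + L / (κ + 1) * P + SL / (κ + 1) * P := by ring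
  rw [hM]
  linarith

end

theorem ghma_optimality_gap_general {n m : ℕ}
    (X : Set (EuclideanSpace ℝ (Fin n)))
    (f r : EuclideanSpace ℝ (Fin n) → ℝ)
    (c : Fin m → EuclideanSpace ℝ (Fin n) → ℝ)
    (f' : EuclideanSpace ℝ (Fin n) → EuclideanSpace ℝ (Fin n))
    (c' : Fin m → EuclideanSpace ℝ (Fin n) → EuclideanSpace ℝ (Fin n))
    (hf : ∀ x, HasGradientAt f (f' x) x)
    (hc : ∀ i x, HasGradientAt (c i) (c' i x) x)
    (hfconv : ConvexOn ℝ univ f) (hcconv : ∀ i, ConvexOn ℝ univ (c i))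
    (κ L : ℝ) (Li : Fin m → ℝ)
    (hκ0 : 0 < κ) (hL : 0 < L) (hLi : ∀ i, 0 < Li i)
    (hfholder : ∀ x y, ‖f' x - f' y‖ ≤ L * ‖x - y‖ ^ κ)
    -- the optimal solution
    (xstar : EuclideanSpace ℝ (Fin n)) (hxstarX : xstar ∈ X)
    (hxstarfeas : ∀ i, c i xstar ≤ 0)
    -- the feasible base point
    (x : EuclideanSpace ℝ (Fin n))
    -- KKT conditions of the GHMA subproblem (CP_x)
    (zstar : EuclideanSpace ℝ (Fin n))
    (μ : Fin m → ℝ) (hμ : ∀ i, 0 ≤ μ i)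
    (l : EuclideanSpace ℝ (Fin n)) (hl : l ∈ subgrad r zstar)
    (hstat : ∀ z ∈ X, 0 ≤
      ⟪f' x + (L * ‖zstar - x‖ ^ (κ - 1)) • (zstar - x) +
        (∑ i, μ i • (c' i x + (Li i * ‖zstar - x‖ ^ (κ - 1)) • (zstar - x))) + l,
        z - zstar⟫)
    (hcomp : ∀ i, μ i * (c i x + ⟪c' i x, zstar - x⟫ +
      (Li i / (κ + 1)) * ‖zstar - x‖ ^ (κ + 1)) = 0) :
    ((f zstar + r zstar) - (f xstar + r xstar) ≤
      ((L + ∑ i, μ i * Li i) / 2) * ‖zstar - x‖ ^ (κ - 1) *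
        (((1 - κ) / (1 + κ)) * ‖zstar - x‖ ^ (2 : ℝ) +
          ‖x - xstar‖ ^ (2 : ℝ) - ‖zstar - xstar‖ ^ (2 : ℝ))) ∧
    (∀ C₁ : ℝ, 0 < C₁ → ‖x - xstar‖ ≤ C₁ → ‖zstar - xstar‖ ≤ C₁ →
      (f zstar + r zstar) - (f xstar + r xstar) ≤
        (L + ∑ i, μ i * Li i) * C₁ * ‖zstar - x‖ ^ κ) := by
  have hgap := ghma_gap_le hf (fun i => hc i x) hfconv hcconv hκ0.le hfholder hxstarfeas hμ
    (hl xstar) (hstat xstar hxstarX) hcomp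
  have hM : 0 ≤ L + ∑ i, μ i * Li i :=
    add_nonneg hL.le (Finset.sum_nonneg fun i _ => mul_nonneg (hμ i) (hLi i).le)
  refine ⟨hgap.trans_eq ?_, fun C₁ _ hx _ => hgap.trans ?_⟩
  · rw [rpow_mul_inner_add_rpow_div_eq (by linarith) x xstar zstar]
    ring
  · rw [mul_assoc]
    exact mul_le_mul_of_nonneg_left (rpow_mul_inner_add_rpow_div_le hκ0 hx) hM

/-- (Lemma 3 in the paper: optimality-gap bounds for GHMA in the
convex setting.)  With `d = z* − x` and `x*` an optimal solution,
(a) `F(z*) − F(x*) ≤ ((L + Σμᵢ Lᵢ)/2)‖d‖^{κ−1}(((1−κ)/(1+κ))‖d‖² + ‖x − x*‖² − ‖z* − x*‖²)`,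
(b) if `‖x − x*‖ ≤ C₁` and `‖z* − x*‖ ≤ C₁` then
`F(z*) − F(x*) ≤ (L + Σμᵢ Lᵢ)C₁‖d‖^κ`. -/
theorem ghma_optimality_gap {n m : ℕ}
    (X : Set (EuclideanSpace ℝ (Fin n))) (hXconv : Convex ℝ X) (hXclosed : IsClosed X)
    (f r : EuclideanSpace ℝ (Fin n) → ℝ)
    (c : Fin m → EuclideanSpace ℝ (Fin n) → ℝ)
    (f' : EuclideanSpace ℝ (Fin n) → EuclideanSpace ℝ (Fin n))
    (c' : Fin m → EuclideanSpace ℝ (Fin n) → EuclideanSpace ℝ (Fin n))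
    (hf : ∀ x, HasGradientAt f (f' x) x)
    (hc : ∀ i x, HasGradientAt (c i) (c' i x) x)
    (hfconv : ConvexOn ℝ univ f) (hcconv : ∀ i, ConvexOn ℝ univ (c i))
    (hrconv : ConvexOn ℝ univ r)
    (κ L : ℝ) (Li : Fin m → ℝ)
    (hκ0 : 0 < κ) (hκ1 : κ ≤ 1) (hL : 0 < L) (hLi : ∀ i, 0 < Li i)
    (hfholder : ∀ x y, ‖f' x - f' y‖ ≤ L * ‖x - y‖ ^ κ)
    (hcholder : ∀ i x y, ‖c' i x - c' i y‖ ≤ Li i * ‖x - y‖ ^ κ)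
    -- the optimal solution
    (xstar : EuclideanSpace ℝ (Fin n)) (hxstarX : xstar ∈ X)
    (hxstarfeas : ∀ i, c i xstar ≤ 0)
    (hxstaropt : ∀ z ∈ X, (∀ i, c i z ≤ 0) → f xstar + r xstar ≤ f z + r z)
    -- the feasible base point
    (x : EuclideanSpace ℝ (Fin n)) (hxX : x ∈ X) (hxfeas : ∀ i, c i x ≤ 0)
    -- KKT conditions of the GHMA subproblem (CP_x)
    (zstar : EuclideanSpace ℝ (Fin n)) (hzX : zstar ∈ X)
    (μ : Fin m → ℝ) (hμ : ∀ i, 0 ≤ μ i)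
    (l : EuclideanSpace ℝ (Fin n)) (hl : l ∈ subgrad r zstar)
    (hstat : ∀ z ∈ X, 0 ≤
      ⟪f' x + (L * ‖zstar - x‖ ^ (κ - 1)) • (zstar - x) +
        (∑ i, μ i • (c' i x + (Li i * ‖zstar - x‖ ^ (κ - 1)) • (zstar - x))) + l,
        z - zstar⟫)
    (hconstr : ∀ i, c i x + ⟪c' i x, zstar - x⟫ +
      (Li i / (κ + 1)) * ‖zstar - x‖ ^ (κ + 1) ≤ 0)
    (hcomp : ∀ i, μ i * (c i x + ⟪c' i x, zstar - x⟫ +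
      (Li i / (κ + 1)) * ‖zstar - x‖ ^ (κ + 1)) = 0) :
    ((f zstar + r zstar) - (f xstar + r xstar) ≤
      ((L + ∑ i, μ i * Li i) / 2) * ‖zstar - x‖ ^ (κ - 1) *
        (((1 - κ) / (1 + κ)) * ‖zstar - x‖ ^ (2 : ℝ) +
          ‖x - xstar‖ ^ (2 : ℝ) - ‖zstar - xstar‖ ^ (2 : ℝ))) ∧
    (∀ C₁ : ℝ, 0 < C₁ → ‖x - xstar‖ ≤ C₁ → ‖zstar - xstar‖ ≤ C₁ →
      (f zstar + r zstar) - (f xstar + r xstar) ≤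
        (L + ∑ i, μ i * Li i) * C₁ * ‖zstar - x‖ ^ κ) :=
  ghma_optimality_gap_general X f r c f' c' hf hc hfconv hcconv κ L Li hκ0 hL hLi hfholder xstar
    hxstarX hxstarfeas x zstar μ hμ l hl hstat hcomp
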